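/- arXiv:1102.2511 — 5 statements merged into one kernel-verified Lean document; each statement's English description precedes it below -/
import Mathlib

section
/- Let T be a time scale with forward shift σ, and let μ_σ denote the Borel–Stieltjes measure on ℝ with distribution function σ, i.e. μ_σ((a,b]) = σ(b+) − σ(a+) (where f+ denotes the right limit). Then for every t ∈ T one has μ_σ({t}) = σ(t) − t, the graininess of t. -/
open Set MeasureTheory Filter Topology Function

open Classical in
noncomputable def fwd (T : Set ℝ) (t : ℝ) : ℝ :=
  if {s | s ∈ T ∧ t < s}.Nonempty then sInf {s | s ∈ T ∧ t < s} else sSup T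

/-! Since `F` is right continuous, `μ_F {t} = F t - F (t-)`, so it suffices that `σ(t-) = t`.
For `s < t` the point `t` itself lies in `T ∩ (s, ∞)`, hence `s ≤ σ s ≤ t`, and `σ s → t` as
`s ↑ t` by squeezing. -/

theorem fwd_mem_Icc_of_lt {T : Set ℝ} {s t : ℝ} (ht : t ∈ T) (hs : s < t) :
    fwd T s ∈ Icc s t := by
  have hne : {u | u ∈ T ∧ s < u}.Nonempty := ⟨t, ht, hs⟩
  rw [fwd, if_pos hne]
  exact ⟨le_csInf hne fun u hu => hu.2.le, csInf_le ⟨s, fun u hu => hu.2.le⟩ ⟨ht, hs⟩⟩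

theorem tendsto_fwd_nhdsLT {T : Set ℝ} {t : ℝ} (ht : t ∈ T) :
    Tendsto (fwd T) (𝓝[<] t) (𝓝 t) := by
  refine tendsto_of_tendsto_of_tendsto_of_le_of_le' (tendsto_id.mono_left nhdsWithin_le_nhds)
    tendsto_const_nhds ?_ ?_
  · filter_upwards [self_mem_nhdsWithin] with s hs using (fwd_mem_Icc_of_lt ht hs).1
  · filter_upwards [self_mem_nhdsWithin] with s hs using (fwd_mem_Icc_of_lt ht hs).2

theorem leftLim_fwd_of_mem {T : Set ℝ} {t : ℝ} (ht : t ∈ T) : leftLim (fwd T) t = t :=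
  leftLim_eq_of_tendsto (tendsto_fwd_nhdsLT ht)

theorem stieltjes_measure_singleton_eq_graininess_general
    (T : Set ℝ)
    (F : StieltjesFunction ℝ) (hF : ∀ t, F t = fwd T t)
    (t : ℝ) (ht : t ∈ T) :
    F.measure {t} = ENNReal.ofReal (fwd T t - t) := by
  have hFT : ⇑F = fwd T := funext hF
  rw [F.measure_singleton, hFT, leftLim_fwd_of_mem ht]

theorem stieltjes_measure_singleton_eq_graininess
    (T : Set ℝ) (hne : T.Nonempty) (hcl : IsClosed T)
    (F : StieltjesFunction ℝ) (hF : ∀ t, F t = fwd T t)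
    (t : ℝ) (ht : t ∈ T) :
    F.measure {t} = ENNReal.ofReal (fwd T t - t) :=
  stieltjes_measure_singleton_eq_graininess_general T F hF t ht
end

section
/- Let T be a time scale and μ_σ the Borel measure on ℝ with distribution function σ. Then the topological support of μ_σ equals T^κ, the closure of T \ {sup T}; in particular, if T has no left scattered maximum, supp(μ_σ) = T. -/
open Set MeasureTheory Filter Topology Function

open Classical in
noncomputable def Tkappa (T : Set ℝ) : Set ℝ :=
  if BddAbove T then closure (T \ {sSup T}) else T

/-!
Since `μ_σ (a, b] = σ b - σ a` (with `σ = fwd T`), a point `x` lies in the support of `μ_σ`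
exactly when `σ a < σ b` for all `a < x < b`. The forward jump `σ` strictly increases across
every point of `T` that is not the maximum of `T`, while it is constant across any interval
`(a, b]` whose only possible point of `T` is that maximum. So the support is the closure of
`T \ upperBounds T`, that is, of `T` minus its maximum.
-/

theorem StieltjesFunction.mem_support_measure_iff (F : StieltjesFunction ℝ) (x : ℝ) :
    x ∈ F.measure.support ↔ ∀ a < x, ∀ b > x, F a < F b := by
  rw [Measure.mem_support_iff_forall]
  constructor
  · intro h a hax b hxb
    have hpos : 0 < F.measure (Ioc a b) :=
      (h _ (Ioo_mem_nhds hax hxb)).trans_le (measure_mono Ioo_subset_Ioc_self)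
    rw [F.measure_Ioc, ENNReal.ofReal_pos] at hpos
    linarith
  · intro h U hU
    obtain ⟨a, b, ⟨hax, hxb⟩, hU⟩ := mem_nhds_iff_exists_Ioo_subset.1 hU
    have hsub : Ioc a ((x + b) / 2) ⊆ U :=
      fun y hy => hU ⟨hy.1, hy.2.trans_lt (by linarith)⟩
    refine lt_of_lt_of_le ?_ (measure_mono hsub)
    rw [F.measure_Ioc, ENNReal.ofReal_pos, sub_pos]
    exact h a hax _ (by linarith)

section fwd

variable {T : Set ℝ} {a b s t : ℝ}

lemma nonempty_setOf_mem_lt_iff : {s | s ∈ T ∧ t < s}.Nonempty ↔ t ∉ upperBounds T := by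
  simp [Set.Nonempty, upperBounds]

lemma fwd_eq_sSup_of_mem_upperBounds (ht : t ∈ upperBounds T) : fwd T t = sSup T := by
  rw [fwd, if_neg fun h => nonempty_setOf_mem_lt_iff.1 h ht]

lemma fwd_eq_sInf_of_notMem_upperBounds (ht : t ∉ upperBounds T) :
    fwd T t = sInf {s | s ∈ T ∧ t < s} := by
  rw [fwd, if_pos (nonempty_setOf_mem_lt_iff.2 ht)]

lemma fwd_le_of_mem (hs : s ∈ T) (ht : t < s) : fwd T t ≤ s := by
  rw [fwd, if_pos ⟨s, hs, ht⟩]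
  exact csInf_le ⟨t, fun _ hr => hr.2.le⟩ ⟨hs, ht⟩

lemma le_fwd_of_notMem_upperBounds (ht : t ∉ upperBounds T) : t ≤ fwd T t := by
  rw [fwd_eq_sInf_of_notMem_upperBounds ht]
  exact le_csInf (nonempty_setOf_mem_lt_iff.2 ht) fun _ hr => hr.2.le

lemma fwd_lt_fwd_of_mem_diff_upperBounds (ht : t ∈ T \ upperBounds T) (hat : a < t)
    (htb : t < b) : fwd T a < fwd T b := by
  calc fwd T a ≤ t := fwd_le_of_mem ht.1 hat
    _ < fwd T b := by
      by_cases hb : b ∈ upperBounds T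
      · obtain ⟨s, hs, hts⟩ := nonempty_setOf_mem_lt_iff.2 ht.2
        rw [fwd_eq_sSup_of_mem_upperBounds hb]
        exact hts.trans_le (le_csSup ⟨b, hb⟩ hs)
      · exact htb.trans_le (le_fwd_of_notMem_upperBounds hb)

lemma fwd_le_fwd_of_inter_Ioc_subset_upperBounds (hab : a ≤ b)
    (h : T ∩ Ioc a b ⊆ upperBounds T) : fwd T b ≤ fwd T a := by
  by_cases ha : a ∈ upperBounds T
  · rw [fwd_eq_sSup_of_mem_upperBounds ha,
      fwd_eq_sSup_of_mem_upperBounds (upperBounds_mono_mem hab ha)]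
  rw [fwd_eq_sInf_of_notMem_upperBounds ha]
  refine le_csInf (nonempty_setOf_mem_lt_iff.2 ha) fun s ⟨hs, has⟩ => ?_
  rcases lt_or_ge b s with hbs | hsb
  · exact fwd_le_of_mem hs hbs
  · have hsT : s ∈ upperBounds T := h ⟨hs, has, hsb⟩
    rw [fwd_eq_sSup_of_mem_upperBounds (upperBounds_mono_mem hsb hsT)]
    exact csSup_le ⟨s, hs⟩ hsT

theorem mem_closure_diff_upperBounds_iff_fwd_lt_fwd (x : ℝ) :
    x ∈ closure (T \ upperBounds T) ↔ ∀ a < x, ∀ b > x, fwd T a < fwd T b := by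
  constructor
  · intro hx a hax b hxb
    obtain ⟨t, htab, ht⟩ := mem_closure_iff.1 hx (Ioo a b) isOpen_Ioo ⟨hax, hxb⟩
    exact fwd_lt_fwd_of_mem_diff_upperBounds ht htab.1 htab.2
  · intro h
    by_contra hx
    obtain ⟨a, b, ⟨hax, hxb⟩, hab⟩ :=
      mem_nhds_iff_exists_Ioo_subset.1 (isClosed_closure.isOpen_compl.mem_nhds hx)
    have hmaximal : T ∩ Ioc a ((x + b) / 2) ⊆ upperBounds T := by
      intro t ⟨htT, hat, htb⟩
      by_contra ht
      exact hab ⟨hat, htb.trans_lt (by linarith)⟩ (subset_closure ⟨htT, ht⟩)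
    exact (fwd_le_fwd_of_inter_Ioc_subset_upperBounds (by linarith) hmaximal).not_gt
      (h a hax _ (by linarith))

end fwd

theorem Tkappa_eq_closure_diff_upperBounds {T : Set ℝ} (hT : IsClosed T) :
    Tkappa T = closure (T \ upperBounds T) := by
  rw [Tkappa]
  split_ifs with hbdd
  · rcases T.eq_empty_or_nonempty with rfl | hne
    · simp
    have hmax : IsGreatest T (sSup T) := ⟨hT.csSup_mem hne hbdd, fun _ => (le_csSup hbdd ·)⟩
    congr 1
    ext t
    refine and_congr_right fun htT => not_congr ⟨fun ht => ?_, fun ht => ?_⟩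
    · exact mem_singleton_iff.1 ht ▸ hmax.2
    · exact (hmax.unique ⟨htT, ht⟩).symm
  · rw [not_nonempty_iff_eq_empty.1 hbdd, sdiff_empty, hT.closure_eq]

theorem support_stieltjes_measure_eq_Tkappa_general
    (T : Set ℝ) (hcl : IsClosed T)
    (F : StieltjesFunction ℝ) (hF : ∀ t, F t = fwd T t) :
    {x : ℝ | ∀ U ∈ 𝓝 x, F.measure U ≠ 0} = Tkappa T := by
  ext x
  rw [Tkappa_eq_closure_diff_upperBounds hcl, mem_closure_diff_upperBounds_iff_fwd_lt_fwd,
    ← funext hF]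
  simp only [mem_ofPred_eq, ← pos_iff_ne_zero, ← Measure.mem_support_iff_forall]
  exact F.mem_support_measure_iff x

theorem support_stieltjes_measure_eq_Tkappa
    (T : Set ℝ) (hne : T.Nonempty) (hcl : IsClosed T)
    (F : StieltjesFunction ℝ) (hF : ∀ t, F t = fwd T t) :
    {x : ℝ | ∀ U ∈ 𝓝 x, F.measure U ≠ 0} = Tkappa T :=
  support_stieltjes_measure_eq_Tkappa_general T hcl F hF
end

section
/- Let T be a time scale, μ_σ the associated Lebesgue–Stieltjes measure, a, b ∈ T with a < b, and f : ℝ → ℝ Borel measurable. Then ∫_{[a,b)} f dμ_σ = ∫_a^b f(ρ(t)) dt, where the right-hand side is a Lebesgue integral; in particular f is μ_σ-integrable on [a,b) if and only if f ∘ ρ is Lebesgue integrable on [a,b). -/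
/-!
On `[a, b)` the backward shift `ρ = bwd T` and the forward shift `σ = fwd T` form a Galois
connection: for `a ≤ v < b` one has `ρ t ≤ v ↔ t ≤ σ v`. Hence the push-forward of Lebesgue
measure on `[a, b)` under `ρ` gives `(-∞, v]` the mass `σ v - a`, which is also the
`μ_σ`-mass of `[a, v]` because `σ` is continuous from the left at points of `T`. The two finite
measures agree on all half-lines, so they are equal, and the change of variables formula for
push-forward measures gives both the integral identity and the integrability equivalence.
-/

open Set MeasureTheory Filter Topology Function

open Classical in
noncomputable def bwd (T : Set ℝ) (t : ℝ) : ℝ :=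
  if {s | s ∈ T ∧ s < t}.Nonempty then sSup {s | s ∈ T ∧ s < t} else sInf T

section Shifts

variable {T : Set ℝ} {a s t v : ℝ}

lemma fwd_of_nonempty (h : {s | s ∈ T ∧ t < s}.Nonempty) :
    fwd T t = sInf {s | s ∈ T ∧ t < s} := by
  rw [fwd, if_pos h]

lemma bwd_of_nonempty (h : {s | s ∈ T ∧ s < t}.Nonempty) :
    bwd T t = sSup {s | s ∈ T ∧ s < t} := by
  rw [bwd, if_pos h]

lemma bwd_of_not_nonempty (h : ¬{s | s ∈ T ∧ s < t}.Nonempty) : bwd T t = sInf T := by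
  rw [bwd, if_neg h]

lemma self_le_fwd (h : {s | s ∈ T ∧ t < s}.Nonempty) : t ≤ fwd T t := by
  rw [fwd_of_nonempty h]
  exact le_csInf h fun _ hs => hs.2.le

lemma fwd_le (hs : s ∈ T) (hts : t < s) : fwd T t ≤ s := by
  rw [fwd_of_nonempty ⟨s, hs, hts⟩]
  exact csInf_le ⟨t, fun _ hu => hu.2.le⟩ ⟨hs, hts⟩

lemma le_bwd (hs : s ∈ T) (hst : s < t) : s ≤ bwd T t := by
  rw [bwd_of_nonempty ⟨s, hs, hst⟩]
  exact le_csSup ⟨t, fun _ hu => hu.2.le⟩ ⟨hs, hst⟩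

lemma bwd_le_self (ha : a ∈ T) (hat : a ≤ t) : bwd T t ≤ t := by
  by_cases h : {s | s ∈ T ∧ s < t}.Nonempty
  · rw [bwd_of_nonempty h]
    exact csSup_le h fun _ hs => hs.2.le
  · rw [bwd_of_not_nonempty h]
    exact (csInf_le ⟨t, fun u hu => not_lt.1 fun hut => h ⟨u, hu, hut⟩⟩ ha).trans hat

lemma monotone_bwd (T : Set ℝ) : Monotone (bwd T) := by
  intro x y hxy
  by_cases hx : {s | s ∈ T ∧ s < x}.Nonempty
  · have hsub : {s | s ∈ T ∧ s < x} ⊆ {s | s ∈ T ∧ s < y} :=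
      fun s hs => ⟨hs.1, hs.2.trans_le hxy⟩
    rw [bwd_of_nonempty hx, bwd_of_nonempty (hx.mono hsub)]
    exact csSup_le_csSup ⟨y, fun _ hs => hs.2.le⟩ hx hsub
  · rw [bwd_of_not_nonempty hx]
    by_cases hy : {s | s ∈ T ∧ s < y}.Nonempty
    · obtain ⟨s, hsT, hsy⟩ := hy
      exact (csInf_le ⟨x, fun u hu => not_lt.1 fun hux => hx ⟨u, hu, hux⟩⟩ hsT).trans
        (le_bwd hsT hsy)
    · rw [bwd_of_not_nonempty hy]

lemma bwd_le_iff_le_fwd (ha : a ∈ T) (hav : a ≤ v) (hv : {s | s ∈ T ∧ v < s}.Nonempty) :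
    bwd T t ≤ v ↔ t ≤ fwd T v := by
  by_cases ht : {s | s ∈ T ∧ s < t}.Nonempty
  · rw [bwd_of_nonempty ht, fwd_of_nonempty hv, csSup_le_iff ⟨t, fun _ hs => hs.2.le⟩ ht,
      le_csInf_iff ⟨v, fun _ hs => hs.2.le⟩ hv]
    -- both sides say that no point of `T` lies strictly between `v` and `t`
    exact ⟨fun h s hs => not_lt.1 fun hst => (h s ⟨hs.1, hst⟩).not_gt hs.2,
      fun h s hs => not_lt.1 fun hvs => (h s ⟨hs.1, hvs⟩).not_gt hs.2⟩
  · have hT : ∀ s ∈ T, t ≤ s := fun s hs => not_lt.1 fun hst => ht ⟨s, hs, hst⟩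
    rw [bwd_of_not_nonempty ht, fwd_of_nonempty hv]
    exact iff_of_true ((csInf_le ⟨t, hT⟩ ha).trans hav) (le_csInf hv fun s hs => hT s hs.1)

lemma leftLim_fwd_of_mem_s6 (hs : s ∈ T) : leftLim (fwd T) s = s := by
  refine leftLim_eq_of_tendsto
    (tendsto_of_tendsto_of_tendsto_of_le_of_le' (tendsto_id.mono_left nhdsWithin_le_nhds)
      tendsto_const_nhds ?_ ?_)
  · filter_upwards [self_mem_nhdsWithin] with t (hts : t < s)
    exact self_le_fwd ⟨s, hs, hts⟩
  · filter_upwards [self_mem_nhdsWithin] with t (hts : t < s)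
    exact fwd_le hs hts

end Shifts

lemma volume_Ico_inter_Iic {a b c : ℝ} (hcb : c ≤ b) :
    volume (Ico a b ∩ Iic c) = ENNReal.ofReal (c - a) := by
  refine le_antisymm ?_ ?_
  · calc volume (Ico a b ∩ Iic c) ≤ volume (Icc a c) :=
          measure_mono fun t ht => ⟨ht.1.1, ht.2⟩
      _ = ENNReal.ofReal (c - a) := Real.volume_Icc
  · calc ENNReal.ofReal (c - a) = volume (Ico a c) := Real.volume_Ico.symm
      _ ≤ volume (Ico a b ∩ Iic c) :=
          measure_mono fun t ht => ⟨⟨ht.1, ht.2.trans_le hcb⟩, ht.2.le⟩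

lemma measure_restrict_Ico_eq_map_bwd {T : Set ℝ} (F : StieltjesFunction ℝ)
    (hF : ∀ t, F t = fwd T t) {a b : ℝ} (ha : a ∈ T) (hb : b ∈ T) :
    F.measure.restrict (Ico a b) = (volume.restrict (Ico a b)).map (bwd T) := by
  have hleft : ∀ s ∈ T, leftLim F s = s := fun s hs => by
    rw [show ⇑F = fwd T from funext hF, leftLim_fwd_of_mem_s6 hs]
  have hmeas : Measurable (bwd T) := (monotone_bwd T).measurable
  have : IsFiniteMeasure (F.measure.restrict (Ico a b)) :=
    isFiniteMeasure_restrict.2 measure_Ico_lt_top.ne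
  refine Measure.ext_of_Iic _ _ fun v => ?_
  rw [Measure.map_apply hmeas measurableSet_Iic, Measure.restrict_apply measurableSet_Iic,
    Measure.restrict_apply (hmeas measurableSet_Iic)]
  rcases lt_or_ge v a with hva | hav
  · have hempty : Iic v ∩ Ico a b = ∅ :=
      eq_empty_of_forall_notMem fun t ht => (ht.1.trans_lt hva).not_ge ht.2.1
    have hsub : bwd T ⁻¹' Iic v ∩ Ico a b ⊆ {a} := fun t ht =>
      eq_of_le_of_not_lt' ht.2.1 fun hat => ((le_bwd ha hat).trans ht.1).not_gt hva
    rw [hempty, measure_empty, measure_mono_null hsub Real.volume_singleton]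
  rcases lt_or_ge v b with hvb | hbv
  · have hv : {s | s ∈ T ∧ v < s}.Nonempty := ⟨b, hb, hvb⟩
    have hpre : bwd T ⁻¹' Iic v ∩ Ico a b = Ico a b ∩ Iic (fwd T v) := by
      ext t
      simp only [mem_inter_iff, mem_preimage, mem_Iic, bwd_le_iff_le_fwd ha hav hv, and_comm]
    have hIcc : Iic v ∩ Ico a b = Icc a v :=
      ext fun t => ⟨fun ht => ⟨ht.2.1, ht.1⟩, fun ht => ⟨ht.2, ht.1, ht.2.trans_lt hvb⟩⟩
    rw [hpre, hIcc, F.measure_Icc, hleft a ha, hF, volume_Ico_inter_Iic (fwd_le hb hvb)]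
  · have hlhs : Iic v ∩ Ico a b = Ico a b :=
      inter_eq_right.2 fun t ht => mem_Iic.2 (ht.2.le.trans hbv)
    have hrhs : bwd T ⁻¹' Iic v ∩ Ico a b = Ico a b :=
      inter_eq_right.2 fun t ht => mem_Iic.2 ((bwd_le_self ha ht.1).trans (ht.2.le.trans hbv))
    rw [hlhs, hrhs, F.measure_Ico, hleft a ha, hleft b hb, Real.volume_Ico]

theorem delta_integral_eq_lebesgue_integral_backward_general
    (T : Set ℝ)
    (F : StieltjesFunction ℝ) (hF : ∀ t, F t = fwd T t)
    (a b : ℝ) (ha : a ∈ T) (hb : b ∈ T)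
    (f : ℝ → ℝ) (hf : Measurable f) :
    (∫ t in Ico a b, f t ∂F.measure) = (∫ t in Ico a b, f (bwd T t)) ∧
    (IntegrableOn f (Ico a b) F.measure ↔
      IntegrableOn (fun t => f (bwd T t)) (Ico a b) volume) := by
  have hmeas : Measurable (bwd T) := (monotone_bwd T).measurable
  rw [IntegrableOn, IntegrableOn, measure_restrict_Ico_eq_map_bwd F hF ha hb,
    integral_map hmeas.aemeasurable hf.aestronglyMeasurable,
    integrable_map_measure hf.aestronglyMeasurable hmeas.aemeasurable]
  exact ⟨rfl, Iff.rfl⟩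

theorem delta_integral_eq_lebesgue_integral_backward
    (T : Set ℝ) (hne : T.Nonempty) (hcl : IsClosed T)
    (F : StieltjesFunction ℝ) (hF : ∀ t, F t = fwd T t)
    (a b : ℝ) (ha : a ∈ T) (hb : b ∈ T) (hab : a < b)
    (f : ℝ → ℝ) (hf : Measurable f) :
    (∫ t in Ico a b, f t ∂F.measure) = (∫ t in Ico a b, f (bwd T t)) ∧
    (IntegrableOn f (Ico a b) F.measure ↔
      IntegrableOn (fun t => f (bwd T t)) (Ico a b) volume) :=
  delta_integral_eq_lebesgue_integral_backward_general T F hF a b ha hb f hf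
end

section
/- (Main Lemma) Let T be a time scale, μ_σ the associated measure, f : T → ℂ, and f̄ its extension to ℝ defined by f̄(t) = f(σ(t)) for t ∉ T. Suppose f is delta differentiable at some t ∈ T^κ and f̄ is locally of bounded variation. Then the symmetric derivative limit lim_{ε↓0} [f̄−(t+ε) − f̄+(t−ε)] / [σ−(t+ε) − σ+(t−ε)] exists and equals f^Δ(t). (Here g± denote one-sided limits.) -/
open Set MeasureTheory Filter Topology Function

/-- `f` has Hilger (delta) derivative `L` at the point `t` of the time scale `T`. -/
def HasDeltaDerivAt (T : Set ℝ) (f : ℝ → ℂ) (t : ℝ) (L : ℂ) : Prop :=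
  ∀ ε > (0:ℝ), ∃ U ∈ nhdsWithin t T, ∀ s ∈ U,
    ‖f (fwd T t) - f s - L * ((fwd T t : ℂ) - (s : ℂ))‖ ≤ ε * |fwd T t - s|

open Classical in
noncomputable def tsExtend (T : Set ℝ) (f : ℝ → ℂ) : ℝ → ℂ :=
  fun t => if t ∈ T then f t else f (fwd T t)

/-! Write `c = σ(t)` and `f̄ = f ∘ tsCeil T`, where `tsCeil T s` is the first point of `T` at or
after `s`. For `s` near `t`, `tsCeil T s` is either `c` or a point of `T` near `t`, so the
delta-derivative estimate `‖f c - f v - L (c - v)‖ ≤ e |c - v|` holds at `v = tsCeil T s`; it passes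
to the one-sided limits `f̄±`, `σ±` at `t ± ε`. Since `σ+(t - ε) ≤ c ≤ σ-(t + ε)`, subtracting the
estimates at the two ends bounds the error of the quotient by `e`. The denominator is positive:
either `σ(t) > t`, or `t ∈ T^κ` with `σ(t) = t` is a limit of other points of `T`. -/

open Classical in
/-- The first point of `T` at or after `s` (`sSup T` if there is none). -/
noncomputable def tsCeil (T : Set ℝ) (s : ℝ) : ℝ := if s ∈ T then s else fwd T s

section TimeScale

variable {T : Set ℝ} {x y p s t : ℝ}

lemma bddAbove_of_not_nonempty_gt (h : ¬ {s | s ∈ T ∧ x < s}.Nonempty) : BddAbove T :=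
  ⟨x, fun s hs => not_lt.1 fun hlt => h ⟨s, hs, hlt⟩⟩

lemma fwd_mem (hcl : IsClosed T) (hne : T.Nonempty) (x : ℝ) : fwd T x ∈ T := by
  unfold fwd
  split_ifs with h
  · exact hcl.closure_subset_iff.2 (fun s hs => hs.1) (csInf_mem_closure h ⟨x, fun s hs => hs.2.le⟩)
  · exact hcl.csSup_mem hne (bddAbove_of_not_nonempty_gt h)

lemma fwd_le_of_mem_s9 (hp : p ∈ T) (hxp : x < p) : fwd T x ≤ p := by
  unfold fwd
  rw [if_pos ⟨p, hp, hxp⟩]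
  exact csInf_le ⟨x, fun s hs => hs.2.le⟩ ⟨hp, hxp⟩

lemma le_fwd_of_mem (hp : p ∈ T) (hxp : x < p) : x ≤ fwd T x := by
  unfold fwd
  rw [if_pos ⟨p, hp, hxp⟩]
  exact le_csInf ⟨p, hp, hxp⟩ fun s hs => hs.2.le

lemma self_le_fwd_s9 (hx : x ∈ T) : x ≤ fwd T x := by
  unfold fwd
  split_ifs with h
  · exact le_csInf h fun s hs => hs.2.le
  · exact le_csSup (bddAbove_of_not_nonempty_gt h) hx

lemma fwd_mono : Monotone (fwd T) := by
  intro a b hab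
  have hbdd : BddBelow {s | s ∈ T ∧ a < s} := ⟨a, fun s hs => hs.2.le⟩
  by_cases hb : {s | s ∈ T ∧ b < s}.Nonempty
  · have hsub : {s | s ∈ T ∧ b < s} ⊆ {s | s ∈ T ∧ a < s} := fun s hs => ⟨hs.1, hab.trans_lt hs.2⟩
    unfold fwd
    rw [if_pos hb, if_pos (hb.mono hsub)]
    exact csInf_le_csInf hbdd hb hsub
  · unfold fwd
    rw [if_neg hb]
    split_ifs with ha
    · obtain ⟨p, hp⟩ := ha
      exact (csInf_le hbdd hp).trans (le_csSup (bddAbove_of_not_nonempty_gt hb) hp.1)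
    · exact le_rfl

lemma fwd_eq_of_forall_notMem_Ioc (hxy : x ≤ y) (h : ∀ p ∈ T, p ∉ Ioc x y) :
    fwd T y = fwd T x := by
  have hset : {s | s ∈ T ∧ y < s} = {s | s ∈ T ∧ x < s} := by
    ext s
    refine ⟨fun hs => ⟨hs.1, hxy.trans_lt hs.2⟩, fun hs => ⟨hs.1, ?_⟩⟩
    exact not_le.1 fun hsy => h s hs.1 ⟨hs.2, hsy⟩
  unfold fwd
  rw [hset]

lemma tsCeil_of_mem (hs : s ∈ T) : tsCeil T s = s := if_pos hs

lemma tsCeil_of_notMem (hs : s ∉ T) : tsCeil T s = fwd T s := if_neg hs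

lemma tsExtend_eq_comp (f : ℝ → ℂ) : tsExtend T f = f ∘ tsCeil T := by
  ext s
  by_cases hs : s ∈ T <;> simp [tsExtend, tsCeil, hs]

lemma tsCeil_mem (hcl : IsClosed T) (hne : T.Nonempty) (s : ℝ) : tsCeil T s ∈ T := by
  by_cases hs : s ∈ T
  · rwa [tsCeil_of_mem hs]
  · rw [tsCeil_of_notMem hs]
    exact fwd_mem hcl hne s

lemma tsCeil_le_of_mem (hp : p ∈ T) (hsp : s ≤ p) : tsCeil T s ≤ p := by
  by_cases hs : s ∈ T
  · rwa [tsCeil_of_mem hs]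
  · rw [tsCeil_of_notMem hs]
    exact fwd_le_of_mem_s9 hp (hsp.lt_of_ne fun h => hs (h ▸ hp))

lemma le_tsCeil_of_mem (hp : p ∈ T) (hsp : s ≤ p) : s ≤ tsCeil T s := by
  by_cases hs : s ∈ T
  · rw [tsCeil_of_mem hs]
  · rw [tsCeil_of_notMem hs]
    exact le_fwd_of_mem hp (hsp.lt_of_ne fun h => hs (h ▸ hp))

lemma tsCeil_le_fwd (s : ℝ) : tsCeil T s ≤ fwd T s := by
  by_cases hs : s ∈ T
  · rw [tsCeil_of_mem hs]
    exact self_le_fwd_s9 hs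
  · rw [tsCeil_of_notMem hs]

lemma fwd_le_tsCeil (hxy : x < y) : fwd T x ≤ tsCeil T y := by
  by_cases hy : y ∈ T
  · rw [tsCeil_of_mem hy]
    exact fwd_le_of_mem_s9 hy hxy
  · rw [tsCeil_of_notMem hy]
    exact fwd_mono hxy.le

lemma tsCeil_mono : Monotone (tsCeil T) := by
  intro a b hab
  by_cases hb : b ∈ T
  · rw [tsCeil_of_mem hb]
    exact tsCeil_le_of_mem hb hab
  · calc tsCeil T a ≤ fwd T a := tsCeil_le_fwd a
      _ ≤ fwd T b := fwd_mono hab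
      _ = tsCeil T b := (tsCeil_of_notMem hb).symm

lemma tendsto_tsCeil_nhdsLT (x : ℝ) : Tendsto (tsCeil T) (𝓝[<] x) (𝓝 (leftLim (fwd T) x)) := by
  have hlim := (tsCeil_mono (T := T)).tendsto_leftLim x
  convert hlim using 2
  refine le_antisymm ?_ (le_of_tendsto_of_tendsto' hlim (fwd_mono.tendsto_leftLim x) tsCeil_le_fwd)
  refine le_of_tendsto (fwd_mono.tendsto_leftLim x) ?_
  filter_upwards [self_mem_nhdsWithin] with s (hs : s < x)
  calc fwd T s ≤ tsCeil T ((s + x) / 2) := fwd_le_tsCeil (by linarith)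
    _ ≤ leftLim (tsCeil T) x := tsCeil_mono.le_leftLim (by linarith)

lemma tendsto_tsCeil_nhdsGT (x : ℝ) : Tendsto (tsCeil T) (𝓝[>] x) (𝓝 (rightLim (fwd T) x)) := by
  have hlim := (tsCeil_mono (T := T)).tendsto_rightLim x
  convert hlim using 2
  refine le_antisymm (ge_of_tendsto hlim ?_)
    (le_of_tendsto_of_tendsto' hlim (fwd_mono.tendsto_rightLim x) tsCeil_le_fwd)
  filter_upwards [self_mem_nhdsWithin] with s (hs : x < s)
  calc rightLim (fwd T) x ≤ fwd T ((x + s) / 2) := fwd_mono.rightLim_le (by linarith)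
    _ ≤ tsCeil T s := fwd_le_tsCeil (by linarith)

lemma rightLim_fwd_le_of_mem (hp : p ∈ T) (hxp : x < p) : rightLim (fwd T) x ≤ p :=
  calc rightLim (fwd T) x ≤ fwd T ((x + p) / 2) := fwd_mono.rightLim_le (by linarith)
    _ ≤ p := fwd_le_of_mem_s9 hp (by linarith)

lemma le_leftLim_fwd_of_mem (hp : p ∈ T) (hpy : p < y) : p ≤ leftLim (fwd T) y :=
  (self_le_fwd_s9 hp).trans (fwd_mono.le_leftLim hpy)

lemma tendsto_tsCeil_nhds (hcl : IsClosed T) (htT : t ∈ T) :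
    Tendsto (tsCeil T) (𝓝 t) (pure (fwd T t) ⊔ 𝓝[T] t) := by
  intro S hS
  rw [mem_map]
  obtain ⟨hcS, hS⟩ := mem_sup.1 hS
  obtain ⟨δ, hδ, hball⟩ := Metric.mem_nhdsWithin_iff.1 hS
  have hmem := tsCeil_mem hcl ⟨t, htT⟩
  by_cases hp : ∃ p ∈ T, t < p ∧ p < t + δ
  · obtain ⟨p, hpT, htp, hpδ⟩ := hp
    filter_upwards [Ioo_mem_nhds (sub_lt_self t hδ) htp] with s hs
    refine hball ⟨?_, hmem s⟩
    rw [Metric.mem_ball, Real.dist_eq, abs_lt]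
    have := le_tsCeil_of_mem hpT hs.2.le
    have := tsCeil_le_of_mem hpT hs.2.le
    constructor <;> linarith [hs.1]
  · push Not at hp
    filter_upwards [Ioo_mem_nhds (sub_lt_self t hδ) (lt_add_of_pos_right t hδ)]
      with s hs
    rcases le_or_gt s t with hst | hts
    · refine hball ⟨?_, hmem s⟩
      rw [Metric.mem_ball, Real.dist_eq, abs_lt]
      have := le_tsCeil_of_mem htT hst
      have := tsCeil_le_of_mem htT hst
      constructor <;> linarith [hs.1]
    · have hgap : ∀ q ∈ T, q ∉ Ioc t s := fun q hq hq' =>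
        (hp q hq hq'.1).not_gt (by linarith [hq'.2, hs.2])
      show tsCeil T s ∈ S
      rw [tsCeil_of_notMem fun hsT => hgap s hsT ⟨hts, le_rfl⟩,
        fwd_eq_of_forall_notMem_Ioc hts.le hgap]
      exact hcS

lemma mem_of_mem_Tkappa (hcl : IsClosed T) (ht : t ∈ Tkappa T) : t ∈ T := by
  unfold Tkappa at ht
  split_ifs at ht
  · exact hcl.closure_subset_iff.2 sdiff_subset ht
  · exact ht

lemma mem_closure_diff_of_fwd_eq (ht : t ∈ Tkappa T) (hc : fwd T t = t) :
    t ∈ closure (T \ {t}) := by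
  by_cases hS : {s | s ∈ T ∧ t < s}.Nonempty
  · have hinf := csInf_mem_closure hS (⟨t, fun s hs => hs.2.le⟩ : BddBelow {s | s ∈ T ∧ t < s})
    unfold fwd at hc
    rw [if_pos hS] at hc
    rw [hc] at hinf
    exact closure_mono (fun s (hs : s ∈ T ∧ t < s) => (⟨hs.1, hs.2.ne'⟩ : s ∈ T \ {t})) hinf
  · unfold fwd at hc
    unfold Tkappa at ht
    rw [if_neg hS] at hc
    rwa [if_pos (bddAbove_of_not_nonempty_gt hS), hc] at ht

lemma rightLim_fwd_lt_leftLim_fwd {ε : ℝ} (htT : t ∈ T) (ht : t ∈ Tkappa T) (hε : 0 < ε) :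
    rightLim (fwd T) (t - ε) < leftLim (fwd T) (t + ε) := by
  rcases (self_le_fwd_s9 htT).lt_or_eq with hlt | heq
  · calc rightLim (fwd T) (t - ε) ≤ t := rightLim_fwd_le_of_mem htT (by linarith)
      _ < fwd T t := hlt
      _ ≤ leftLim (fwd T) (t + ε) := fwd_mono.le_leftLim (by linarith)
  · obtain ⟨p, ⟨hpT, hpt⟩, hdist⟩ :=
      Metric.mem_closure_iff.1 (mem_closure_diff_of_fwd_eq ht heq.symm) ε hε
    rw [Real.dist_eq, abs_lt] at hdist
    rcases lt_or_gt_of_ne hpt with hp | hp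
    · calc rightLim (fwd T) (t - ε) ≤ p := rightLim_fwd_le_of_mem hpT (by linarith)
        _ < t := hp
        _ ≤ leftLim (fwd T) (t + ε) := le_leftLim_fwd_of_mem htT (by linarith)
    · calc rightLim (fwd T) (t - ε) ≤ t := rightLim_fwd_le_of_mem htT (by linarith)
        _ < p := hp
        _ ≤ leftLim (fwd T) (t + ε) := le_leftLim_fwd_of_mem hpT (by linarith)

end TimeScale

section BoundedVariation

variable {α E : Type*} [LinearOrder α] [TopologicalSpace α] [OrderTopology α]
  [PseudoEMetricSpace E] [CompleteSpace E] {f : α → E}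

theorem LocallyBoundedVariationOn.tendsto_leftLim [NoMinOrder α]
    (hf : LocallyBoundedVariationOn f univ) (x : α) : Tendsto f (𝓝[<] x) (𝓝 (leftLim f x)) := by
  obtain ⟨a, hax⟩ := exists_lt x
  obtain ⟨l, hl⟩ := (hf a x trivial trivial).exists_tendsto_left x
  rw [univ_inter, nhdsWithin_inter_of_mem (Icc_mem_nhdsLT hax)] at hl
  exact tendsto_leftLim_of_tendsto ⟨l, hl⟩

theorem LocallyBoundedVariationOn.tendsto_rightLim [NoMaxOrder α]
    (hf : LocallyBoundedVariationOn f univ) (x : α) : Tendsto f (𝓝[>] x) (𝓝 (rightLim f x)) := by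
  obtain ⟨b, hxb⟩ := exists_gt x
  obtain ⟨l, hl⟩ := (hf x b trivial trivial).exists_tendsto_right x
  rw [univ_inter, nhdsWithin_inter_of_mem (Icc_mem_nhdsGT hxb)] at hl
  exact tendsto_rightLim_of_tendsto ⟨l, hl⟩

end BoundedVariation

lemma norm_sub_sub_mul_le_of_tendsto {α : Type*} {l : Filter α} [l.NeBot] {g : α → ℂ} {u : α → ℝ}
    {z V L : ℂ} {B c e : ℝ} (hg : Tendsto g l (𝓝 V)) (hu : Tendsto u l (𝓝 B))
    (h : ∀ᶠ s in l, ‖z - g s - L * (c - u s)‖ ≤ e * |c - u s|) :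
    ‖z - V - L * (c - B)‖ ≤ e * |c - B| := by
  have hclosed : IsClosed {q : ℂ × ℝ | ‖z - q.1 - L * (c - q.2)‖ ≤ e * |c - q.2|} :=
    isClosed_le (by fun_prop) (by fun_prop)
  exact hclosed.mem_of_tendsto (hg.prodMk_nhds hu) h

lemma norm_slope_sub_le {A B c e : ℝ} {z V W L : ℂ} (hAc : A ≤ c) (hcB : c ≤ B) (hAB : A < B)
    (hW : ‖z - W - L * (c - A)‖ ≤ e * |c - A|) (hV : ‖z - V - L * (c - B)‖ ≤ e * |c - B|) :
    ‖(V - W) / ((B - A : ℝ) : ℂ) - L‖ ≤ e := by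
  have hBA : (0 : ℝ) < B - A := sub_pos.2 hAB
  have hsplit : V - W - L * ((B - A : ℝ) : ℂ) = (z - W - L * (c - A)) - (z - V - L * (c - B)) := by
    push_cast; ring
  rw [abs_of_nonneg (sub_nonneg.2 hAc)] at hW
  rw [abs_of_nonpos (sub_nonpos.2 hcB)] at hV
  rw [← mul_div_cancel_right₀ L (Complex.ofReal_ne_zero.2 hBA.ne'), ← sub_div, norm_div,
    Complex.norm_real, Real.norm_of_nonneg hBA.le, div_le_iff₀ hBA, hsplit]
  calc _ ≤ ‖z - W - L * (c - A)‖ + ‖z - V - L * (c - B)‖ := norm_sub_le _ _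
    _ ≤ e * (c - A) + e * -(c - B) := add_le_add hW hV
    _ = e * (B - A) := by ring

theorem hilger_deriv_eq_radon_nikodym_deriv_general
    (T : Set ℝ) (hcl : IsClosed T)
    (f : ℝ → ℂ) (t : ℝ) (ht : t ∈ Tkappa T) (L : ℂ)
    (hd : HasDeltaDerivAt T f t L)
    (hbv : LocallyBoundedVariationOn (tsExtend T f) Set.univ) :
    Tendsto (fun ε : ℝ =>
        (leftLim (tsExtend T f) (t + ε) - rightLim (tsExtend T f) (t - ε)) /
        (((leftLim (fwd T) (t + ε) - rightLim (fwd T) (t - ε) : ℝ)) : ℂ))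
      (𝓝[>] (0:ℝ)) (𝓝 L) := by
  have htT : t ∈ T := mem_of_mem_Tkappa hcl ht
  set c := fwd T t
  rw [Metric.nhds_basis_closedBall.tendsto_right_iff]
  intro e he
  have hE : ∀ᶠ s in 𝓝 t, ‖f c - f (tsCeil T s) - L * (c - tsCeil T s)‖ ≤ e * |c - tsCeil T s| := by
    refine (tendsto_tsCeil_nhds hcl htT).eventually
      (p := fun v => ‖f c - f v - L * (c - v)‖ ≤ e * |c - v|) (eventually_sup.2 ⟨by simp [c], ?_⟩)
    obtain ⟨U, hU, hUe⟩ := hd e he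
    exact mem_of_superset hU hUe
  have hE_right :=
    ((continuous_const_add t).tendsto' 0 t (add_zero t)).eventually hE.eventually_nhds
  have hE_left :=
    ((continuous_sub_left t).tendsto' 0 t (sub_zero t)).eventually hE.eventually_nhds
  filter_upwards [self_mem_nhdsWithin, nhdsWithin_le_nhds hE_right, nhdsWithin_le_nhds hE_left]
    with ε (hε : 0 < ε) hR hL
  rw [Metric.mem_closedBall, dist_eq_norm]
  rw [tsExtend_eq_comp] at hbv ⊢
  exact norm_slope_sub_le ((rightLim_fwd_le_of_mem htT (by linarith)).trans (self_le_fwd_s9 htT))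
    (fwd_mono.le_leftLim (by linarith)) (rightLim_fwd_lt_leftLim_fwd htT ht hε)
    (norm_sub_sub_mul_le_of_tendsto (hbv.tendsto_rightLim _) (tendsto_tsCeil_nhdsGT _)
      (nhdsWithin_le_nhds hL))
    (norm_sub_sub_mul_le_of_tendsto (hbv.tendsto_leftLim _) (tendsto_tsCeil_nhdsLT _)
      (nhdsWithin_le_nhds hR))

theorem hilger_deriv_eq_radon_nikodym_deriv
    (T : Set ℝ) (hne : T.Nonempty) (hcl : IsClosed T)
    (f : ℝ → ℂ) (t : ℝ) (ht : t ∈ Tkappa T) (L : ℂ)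
    (hd : HasDeltaDerivAt T f t L)
    (hbv : LocallyBoundedVariationOn (tsExtend T f) Set.univ) :
    Tendsto (fun ε : ℝ =>
        (leftLim (tsExtend T f) (t + ε) - rightLim (tsExtend T f) (t - ε)) /
        (((leftLim (fwd T) (t + ε) - rightLim (fwd T) (t - ε) : ℝ)) : ℂ))
      (𝓝[>] (0:ℝ)) (𝓝 L) :=
  hilger_deriv_eq_radon_nikodym_deriv_general T hcl f t ht L hd hbv
end

section
/- There exist a time scale T, a dense point t ∈ T, and a function f : T → ℂ that is delta differentiable at t, such that the extension f̄ (with f̄(s) = f(σ(s)) for s ∉ T) is not right differentiable at t. Concretely: for T = {0} ∪ {±1/n! : n ∈ ℕ} and f(0) = 0, f(±1/n!) = ±1/(n+1)!, the function f is delta differentiable at 0 with f^Δ(0) = 0, but for every c > 1 the difference quotients (f̄(c/n!) − f(0))/(c/n!) converge to 1/c ≠ 0 as n → ∞, so f̄ has no right derivative at 0. -/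
/-!
Take a positive, strictly decreasing sequence `a` with `a (n + 1) / a n → 0`, the time scale
`T = {0} ∪ {±a n}` and the map `f` sending `±a n` to `±a (n + 1)`, the neighbouring point nearer
to `0` (for the theorem, `a n = 1 / (n + 1)!`). On `T` we have `|f s| / |s| = a (n + 1) / a n → 0`,
so `f` is delta differentiable at the dense point `0` with derivative `0`. The extension `f̄`
however is constant equal to `a (n + 1)` on the gap `(a (n + 1), a n)`, where `σ = a n`; the
points `2 a (n + 1)` eventually lie in that gap and give difference quotients `1 / 2`, while the
points `a n` themselves give quotients tending to `0`.
-/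

open Set MeasureTheory Filter Topology Function

open Asymptotics

theorem not_exists_tendsto_of_tendsto_comp_ne {ι α β : Type*} [TopologicalSpace β] [T2Space β]
    {l : Filter ι} [l.NeBot] {F : Filter α} {g : α → β} {u v : ι → α} {b c : β}
    (hu : Tendsto u l F) (hv : Tendsto v l F) (hgu : Tendsto (g ∘ u) l (𝓝 b))
    (hgv : Tendsto (g ∘ v) l (𝓝 c)) (hbc : b ≠ c) : ¬ ∃ L, Tendsto g F (𝓝 L) := by
  rintro ⟨L, hL⟩
  exact hbc ((tendsto_nhds_unique hgu (hL.comp hu)).trans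
    (tendsto_nhds_unique (hL.comp hv) hgv))

theorem tendsto_zero_of_ratio_tendsto_zero {a : ℕ → ℝ} (ha_pos : ∀ n, 0 < a n)
    (ha_ratio : Tendsto (fun n => a (n + 1) / a n) atTop (𝓝 0)) : Tendsto a atTop (𝓝 0) := by
  refine (summable_of_ratio_test_tendsto_lt_one zero_lt_one
    (Eventually.of_forall fun n => (ha_pos n).ne') ?_).tendsto_atTop_zero
  simpa only [Real.norm_eq_abs, abs_of_pos (ha_pos _)] using ha_ratio

section TimeScale

variable {T : Set ℝ} {t : ℝ}

theorem fwd_eq_of_isLeast {b : ℝ} (h : IsLeast {s | s ∈ T ∧ t < s} b) : fwd T t = b := by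
  rw [fwd, if_pos ⟨b, h.1⟩, h.csInf_eq]

theorem fwd_eq_self_of_tendsto {u : ℕ → ℝ} (huT : ∀ n, u n ∈ T) (hu_gt : ∀ n, t < u n)
    (hu : Tendsto u atTop (𝓝 t)) : fwd T t = t := by
  have hne : {s | s ∈ T ∧ t < s}.Nonempty := ⟨u 0, huT 0, hu_gt 0⟩
  rw [fwd, if_pos hne]
  refine le_antisymm ?_ (le_csInf hne fun s hs => hs.2.le)
  exact ge_of_tendsto' hu fun n => csInf_le ⟨t, fun s hs => hs.2.le⟩ ⟨huT n, hu_gt n⟩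

theorem bwd_eq_self_of_tendsto {u : ℕ → ℝ} (huT : ∀ n, u n ∈ T) (hu_lt : ∀ n, u n < t)
    (hu : Tendsto u atTop (𝓝 t)) : bwd T t = t := by
  have hne : {s | s ∈ T ∧ s < t}.Nonempty := ⟨u 0, huT 0, hu_lt 0⟩
  rw [bwd, if_pos hne]
  refine le_antisymm (csSup_le hne fun s hs => hs.2.le) ?_
  exact le_of_tendsto' hu fun n => le_csSup ⟨t, fun s hs => hs.2.le⟩ ⟨huT n, hu_lt n⟩

theorem hasDeltaDerivAt_of_isLittleO {f : ℝ → ℂ} {L : ℂ} (hσ : fwd T t = t)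
    (h : (fun s => f s - f t - L * ((s : ℂ) - t)) =o[𝓝[T] t] fun s => s - t) :
    HasDeltaDerivAt T f t L := by
  intro ε hε
  refine ⟨_, isLittleO_iff.mp h hε, fun s hs => ?_⟩
  rw [hσ]
  calc ‖f t - f s - L * ((t : ℂ) - s)‖ = ‖f s - f t - L * ((s : ℂ) - t)‖ := by
        rw [← norm_neg]; ring_nf
    _ ≤ ε * ‖s - t‖ := hs
    _ = ε * |t - s| := by rw [Real.norm_eq_abs, abs_sub_comm]

theorem tsExtend_of_mem {f : ℝ → ℂ} (ht : t ∈ T) : tsExtend T f t = f t := if_pos ht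

theorem tsExtend_of_notMem {f : ℝ → ℂ} (ht : t ∉ T) : tsExtend T f t = f (fwd T t) := if_neg ht

end TimeScale

section SeqTimeScale

variable {a : ℕ → ℝ}

def seqTimeScale (a : ℕ → ℝ) : Set ℝ := insert 0 (range a ∪ range fun n => -a n)

noncomputable def stepToZero (a : ℕ → ℝ) (x : ℝ) : ℂ :=
  (SignType.sign x * extend a (fun n => a (n + 1)) 0 |x| : ℝ)

theorem stepToZero_zero : stepToZero a 0 = 0 := by simp [stepToZero]

theorem zero_mem_seqTimeScale : (0 : ℝ) ∈ seqTimeScale a := mem_insert _ _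

theorem seq_mem_seqTimeScale (n : ℕ) : a n ∈ seqTimeScale a := Or.inr (Or.inl ⟨n, rfl⟩)

theorem neg_seq_mem_seqTimeScale (n : ℕ) : -a n ∈ seqTimeScale a := Or.inr (Or.inr ⟨n, rfl⟩)

theorem isClosed_seqTimeScale (ha : Tendsto a atTop (𝓝 0)) : IsClosed (seqTimeScale a) := by
  have hneg : Tendsto (fun n => -a n) atTop (𝓝 0) := by simpa using ha.neg
  rw [seqTimeScale, insert_union_distrib]
  exact ha.isCompact_insert_range.isClosed.union hneg.isCompact_insert_range.isClosed

variable (ha_pos : ∀ n, 0 < a n)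
include ha_pos

theorem fwd_seqTimeScale_zero (ha : Tendsto a atTop (𝓝 0)) : fwd (seqTimeScale a) 0 = 0 :=
  fwd_eq_self_of_tendsto seq_mem_seqTimeScale ha_pos ha

theorem bwd_seqTimeScale_zero (ha : Tendsto a atTop (𝓝 0)) : bwd (seqTimeScale a) 0 = 0 :=
  bwd_eq_self_of_tendsto neg_seq_mem_seqTimeScale (fun n => neg_lt_zero.2 (ha_pos n))
    (by simpa using ha.neg)

variable (ha_anti : StrictAnti a)
include ha_anti

theorem notMem_seqTimeScale_of_mem_Ioo {n : ℕ} {v : ℝ} (hv : v ∈ Ioo (a (n + 1)) (a n)) :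
    v ∉ seqTimeScale a := by
  rintro (rfl | ⟨m, rfl⟩ | ⟨m, rfl⟩)
  · linarith [ha_pos (n + 1), hv.1]
  · have h₁ := ha_anti.lt_iff_gt.mp hv.1
    have h₂ := ha_anti.lt_iff_gt.mp hv.2
    omega
  · linarith [ha_pos (n + 1), ha_pos m, hv.1]

theorem fwd_seqTimeScale_of_mem_Ioo {n : ℕ} {v : ℝ} (hv : v ∈ Ioo (a (n + 1)) (a n)) :
    fwd (seqTimeScale a) v = a n := by
  refine fwd_eq_of_isLeast ⟨⟨seq_mem_seqTimeScale n, hv.2⟩, ?_⟩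
  rintro s ⟨rfl | ⟨m, rfl⟩ | ⟨m, rfl⟩, hvs⟩
  · linarith [ha_pos (n + 1), hv.1]
  · have : m < n + 1 := ha_anti.lt_iff_gt.mp (hv.1.trans hvs)
    exact ha_anti.antitone (by omega)
  · linarith [ha_pos (n + 1), ha_pos m, hv.1]

theorem stepToZero_seq (n : ℕ) : stepToZero a (a n) = a (n + 1) := by
  simp [stepToZero, ha_pos n, abs_of_pos, ha_anti.injective.extend_apply]

theorem stepToZero_neg_seq (n : ℕ) : stepToZero a (-a n) = -a (n + 1) := by
  simp [stepToZero, ha_pos n, abs_of_pos, ha_anti.injective.extend_apply]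

theorem tsExtend_stepToZero_seq (n : ℕ) :
    tsExtend (seqTimeScale a) (stepToZero a) (a n) = a (n + 1) := by
  rw [tsExtend_of_mem (seq_mem_seqTimeScale n), stepToZero_seq ha_pos ha_anti]

theorem tsExtend_stepToZero_of_mem_Ioo {n : ℕ} {v : ℝ} (hv : v ∈ Ioo (a (n + 1)) (a n)) :
    tsExtend (seqTimeScale a) (stepToZero a) v = a (n + 1) := by
  rw [tsExtend_of_notMem (notMem_seqTimeScale_of_mem_Ioo ha_pos ha_anti hv),
    fwd_seqTimeScale_of_mem_Ioo ha_pos ha_anti hv, stepToZero_seq ha_pos ha_anti]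

variable (ha_ratio : Tendsto (fun n => a (n + 1) / a n) atTop (𝓝 0))
include ha_ratio

theorem hasDeltaDerivAt_stepToZero : HasDeltaDerivAt (seqTimeScale a) (stepToZero a) 0 0 := by
  refine hasDeltaDerivAt_of_isLittleO
    (fwd_seqTimeScale_zero ha_pos (tendsto_zero_of_ratio_tendsto_zero ha_pos ha_ratio)) ?_
  simp only [stepToZero_zero, Complex.ofReal_zero, sub_zero, zero_mul]
  refine isLittleO_iff.mpr fun c hc => ?_
  obtain ⟨N, hN⟩ := eventually_atTop.mp (ha_ratio.eventually (ge_mem_nhds hc))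
  have hstep : ∀ n, a n < a N → a (n + 1) ≤ c * a n := fun n hn =>
    (div_le_iff₀ (ha_pos n)).mp (hN n (ha_anti.lt_iff_gt.mp hn).le)
  filter_upwards [self_mem_nhdsWithin,
    nhdsWithin_le_nhds (Ioo_mem_nhds (neg_lt_zero.2 (ha_pos N)) (ha_pos N))] with s hsT hs
  rcases hsT with rfl | ⟨n, rfl⟩ | ⟨n, rfl⟩
  · simp [stepToZero_zero]
  · simpa [stepToZero_seq ha_pos ha_anti, abs_of_pos (ha_pos _)] using hstep n hs.2
  · simpa [stepToZero_neg_seq ha_pos ha_anti, abs_of_pos (ha_pos _)]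
      using hstep n (neg_lt_neg_iff.mp hs.1)

theorem not_exists_tendsto_slope_tsExtend_stepToZero :
    ¬ ∃ L : ℂ, Tendsto
      (fun s : ℝ => (tsExtend (seqTimeScale a) (stepToZero a) s -
        tsExtend (seqTimeScale a) (stepToZero a) 0) / ((s : ℂ) - ((0 : ℝ) : ℂ)))
      (𝓝[>] 0) (𝓝 L) := by
  have ha := tendsto_zero_of_ratio_tendsto_zero ha_pos ha_ratio
  have hgap : ∀ᶠ n in atTop, 2 * a (n + 1) ∈ Ioo (a (n + 1)) (a n) := by
    filter_upwards [ha_ratio.eventually (gt_mem_nhds one_half_pos)] with n hn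
    rw [div_lt_iff₀ (ha_pos n)] at hn
    constructor <;> linarith [ha_pos (n + 1)]
  refine not_exists_tendsto_of_tendsto_comp_ne (l := atTop) (u := a) (v := fun n => 2 * a (n + 1))
    (b := 0) (c := ((1 / 2 : ℝ) : ℂ)) ?_ ?_ ?_ ?_ (by norm_num)
  · exact tendsto_nhdsWithin_of_tendsto_nhds_of_eventually_within _ ha
      (Eventually.of_forall ha_pos)
  · refine tendsto_nhdsWithin_of_tendsto_nhds_of_eventually_within _ ?_
      (Eventually.of_forall fun n => by simp [ha_pos (n + 1)])
    simpa using (ha.comp (tendsto_add_atTop_nat 1)).const_mul 2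
  · refine (Complex.ofReal_zero ▸ ha_ratio.ofReal).congr fun n => ?_
    simp [tsExtend_stepToZero_seq ha_pos ha_anti, tsExtend_of_mem zero_mem_seqTimeScale,
      stepToZero_zero]
  · refine tendsto_const_nhds.congr' ?_
    filter_upwards [hgap] with n hn
    rw [comp_apply, tsExtend_stepToZero_of_mem_Ioo ha_pos ha_anti hn,
      tsExtend_of_mem zero_mem_seqTimeScale, stepToZero_zero]
    push_cast [sub_zero]
    field_simp [Complex.ofReal_ne_zero.mpr (ha_pos (n + 1)).ne']

end SeqTimeScale

open Nat in
theorem exists_delta_differentiable_extension_not_right_differentiable :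
    ∃ (T : Set ℝ) (t : ℝ) (f : ℝ → ℂ),
      IsClosed T ∧ T.Nonempty ∧ t ∈ T ∧
      fwd T t = t ∧ bwd T t = t ∧
      (∃ L, HasDeltaDerivAt T f t L) ∧
      ¬ ∃ L' : ℂ, Tendsto
          (fun s : ℝ => (tsExtend T f s - tsExtend T f t) / ((s : ℂ) - (t : ℂ)))
          (𝓝[>] t) (𝓝 L') := by
  set a : ℕ → ℝ := fun n => ((n + 1)! : ℝ)⁻¹
  have ha_pos : ∀ n, 0 < a n := fun n => by positivity
  have ha_anti : StrictAnti a := fun m n hmn => by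
    simp only [a]
    gcongr
  have ha_ratio : Tendsto (fun n => a (n + 1) / a n) atTop (𝓝 0) := by
    refine (tendsto_one_div_add_atTop_nhds_zero_nat.comp (tendsto_add_atTop_nat 1)).congr
      fun n => ?_
    simp only [a, comp_apply, factorial_succ (n + 1)]
    push_cast
    field_simp
  have ha := tendsto_zero_of_ratio_tendsto_zero ha_pos ha_ratio
  exact ⟨seqTimeScale a, 0, stepToZero a, isClosed_seqTimeScale ha,
    ⟨0, zero_mem_seqTimeScale⟩, zero_mem_seqTimeScale,
    fwd_seqTimeScale_zero ha_pos ha, bwd_seqTimeScale_zero ha_pos ha,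
    ⟨0, hasDeltaDerivAt_stepToZero ha_pos ha_anti ha_ratio⟩,
    not_exists_tendsto_slope_tsExtend_stepToZero ha_pos ha_anti ha_ratio⟩
end
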